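/- If γ_c : [0,1]^k → ℝ is monotone nondecreasing in each coordinate and Π_i(θ) is stochastically no smaller than Uniform(0,1) for each i (P(Π_i(θ) ≤ α) ≤ α), with the Π_i independent, then F(γ_c(Π_1(θ),...,Π_k(θ))) satisfies P(·≤ α) ≤ α for all α ∈ [0,1], where F is the CDF of γ_c evaluated at independent exact Uniform(0,1) variables. -/

import Mathlib

/-!
The set `{x | F (γ x) ≤ α}` is a measurable lower set of `ℝ^k`, and a lower set of a product of
lines gets no more mass from stochastically larger factors: integrate out one coordinate at a
time, each slice of a lower set being again a lower set, and on `ℝ` the mass of a lower set is the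
supremum of the masses of the rays `Iic a` it contains. So the law of `(Π_1, …, Π_k)`, a product
by independence, gives that set at most its mass under the uniform product, which is at most `α`
by the probability integral transform for the law of `γ(U_1, …, U_k)`.
-/

open MeasureTheory ProbabilityTheory Set

lemma IsLowerSet.measure_eq_iSup_Iic {S : Set ℝ} (hS : IsLowerSet S) (μ : Measure ℝ) :
    μ S = ⨆ a ∈ S, μ (Iic a) := by
  refine le_antisymm ?_ (iSup₂_le fun a ha => measure_mono (hS.Iic_subset ha))
  by_cases hmax : ∃ c ∈ S, ∀ x ∈ S, x ≤ c
  · obtain ⟨c, hc, hSc⟩ := hmax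
    exact (measure_mono hSc).trans (le_iSup₂ (f := fun a _ => μ (Iic a)) c hc)
  · push Not at hmax
    -- without a greatest element, `S` is the countable directed union of its rational rays
    have hcover : S ⊆ ⋃ q : {q : ℚ // (q : ℝ) ∈ S}, Iic (q : ℝ) := by
      intro x hx
      obtain ⟨y, hy, hxy⟩ := hmax x hx
      obtain ⟨q, hxq, hqy⟩ := exists_rat_btwn hxy
      exact mem_iUnion.2 ⟨⟨q, hS hqy.le hy⟩, hxq.le⟩
    have hdir : Directed (· ⊆ ·) fun q : {q : ℚ // (q : ℝ) ∈ S} => Iic (q : ℝ) :=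
      Monotone.directed_le fun q r h => Iic_subset_Iic.2 (Rat.cast_le.2 h)
    calc μ S ≤ μ (⋃ q : {q : ℚ // (q : ℝ) ∈ S}, Iic (q : ℝ)) := measure_mono hcover
      _ = ⨆ q : {q : ℚ // (q : ℝ) ∈ S}, μ (Iic (q : ℝ)) := hdir.measure_iUnion
      _ ≤ ⨆ a ∈ S, μ (Iic a) := iSup_le fun q => le_iSup₂ (f := fun a _ => μ (Iic a)) _ q.2

lemma IsLowerSet.measure_le_of_Iic_le {S : Set ℝ} (hS : IsLowerSet S) {μ ν : Measure ℝ}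
    (h : ∀ a, μ (Iic a) ≤ ν (Iic a)) : μ S ≤ ν S := by
  rw [hS.measure_eq_iSup_Iic, hS.measure_eq_iSup_Iic]
  exact iSup₂_mono fun a _ => h a

lemma Fin.monotone_insertNth_zero_uncurry {n : ℕ} {α : Type*} [Preorder α] :
    Monotone fun p : α × (Fin n → α) => Fin.insertNth (α := fun _ => α) 0 p.1 p.2 := by
  intro p q hpq
  simp only [Fin.insertNth_zero']
  exact Fin.cons_le_cons.2 hpq

theorem IsLowerSet.measure_pi_le_of_Iic_le {n : ℕ} {S : Set (Fin n → ℝ)} (hS : IsLowerSet S)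
    (hSm : MeasurableSet S) {μ ν : Fin n → Measure ℝ} [∀ i, SigmaFinite (μ i)]
    [∀ i, SigmaFinite (ν i)] (h : ∀ i a, μ i (Iic a) ≤ ν i (Iic a)) :
    Measure.pi μ S ≤ Measure.pi ν S := by
  induction n with
  | zero => rw [Measure.pi_of_empty μ, Measure.pi_of_empty ν]
  | succ n ih =>
    set e := MeasurableEquiv.piFinSuccAbove (fun _ : Fin (n + 1) => ℝ) 0
    have hAm : MeasurableSet (e.symm ⁻¹' S) := e.symm.measurable hSm
    have hA : IsLowerSet (e.symm ⁻¹' S) := hS.preimage Fin.monotone_insertNth_zero_uncurry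
    rw [← (measurePreserving_piFinSuccAbove μ 0).symm.measure_preimage_equiv,
      ← (measurePreserving_piFinSuccAbove ν 0).symm.measure_preimage_equiv]
    calc ((μ 0).prod (Measure.pi fun j => μ (Fin.succAbove 0 j))) (e.symm ⁻¹' S)
        ≤ ((μ 0).prod (Measure.pi fun j => ν (Fin.succAbove 0 j))) (e.symm ⁻¹' S) := by
          rw [Measure.prod_apply hAm, Measure.prod_apply hAm]
          exact lintegral_mono fun x =>
            ih (hA.preimage fun y y' hy => Prod.mk_le_mk.2 ⟨le_rfl, hy⟩)
              (measurable_prodMk_left hAm) fun j => h _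
      _ ≤ ((ν 0).prod (Measure.pi fun j => ν (Fin.succAbove 0 j))) (e.symm ⁻¹' S) := by
          rw [Measure.prod_apply_symm hAm, Measure.prod_apply_symm hAm]
          exact lintegral_mono fun y =>
            (hA.preimage fun x x' hx => Prod.mk_le_mk.2 ⟨hx, le_rfl⟩).measure_le_of_Iic_le (h 0)

lemma measure_Iic_le_volume_restrict_Icc {ν : Measure ℝ} [IsProbabilityMeasure ν]
    (h : ∀ α ∈ Icc (0 : ℝ) 1, ν (Iic α) ≤ ENNReal.ofReal α) (a : ℝ) :
    ν (Iic a) ≤ volume.restrict (Icc 0 1) (Iic a) := by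
  have hIcc : Iic a ∩ Icc (0 : ℝ) 1 = Icc 0 (min a 1) := by
    ext x; simp only [mem_inter_iff, mem_Iic, mem_Icc, le_min_iff]; tauto
  rw [Measure.restrict_apply measurableSet_Iic, hIcc, Real.volume_Icc, sub_zero]
  rcases lt_or_ge a 0 with ha | ha
  · calc ν (Iic a) ≤ ν (Iic 0) := measure_mono (Iic_subset_Iic.2 ha.le)
      _ ≤ ENNReal.ofReal 0 := h 0 ⟨le_rfl, zero_le_one⟩
      _ ≤ _ := by rw [ENNReal.ofReal_zero]; exact bot_le
  rcases le_or_gt a 1 with ha1 | ha1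
  · rw [min_eq_left ha1]
    exact h a ⟨ha, ha1⟩
  · rw [min_eq_right ha1.le, ENNReal.ofReal_one]
    exact prob_le_one

lemma monotone_toReal_measure_setOf_le {X : Type*} [MeasurableSpace X] (ρ : Measure X)
    [IsFiniteMeasure ρ] (Y : X → ℝ) : Monotone fun t => (ρ {x | Y x ≤ t}).toReal :=
  fun _ _ hst => ENNReal.toReal_mono (measure_ne_top _ _) (measure_mono fun _ hx => le_trans hx hst)

lemma measure_cdf_comp_le {X : Type*} [MeasurableSpace X] (ρ : Measure X) [IsFiniteMeasure ρ]
    {Y : X → ℝ} (hY : Measurable Y) (α : ℝ) :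
    ρ {x | (ρ {y | Y y ≤ Y x}).toReal ≤ α} ≤ ENNReal.ofReal α := by
  have hT : IsLowerSet {t | (ρ {y | Y y ≤ t}).toReal ≤ α} :=
    isLowerSet_Iic α |>.preimage (monotone_toReal_measure_setOf_le ρ Y)
  calc ρ {x | (ρ {y | Y y ≤ Y x}).toReal ≤ α}
      ≤ ρ.map Y {t | (ρ {y | Y y ≤ t}).toReal ≤ α} := Measure.le_map_apply hY.aemeasurable _
    _ = ⨆ t ∈ {t | (ρ {y | Y y ≤ t}).toReal ≤ α}, ρ.map Y (Iic t) := hT.measure_eq_iSup_Iic _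
    _ ≤ ENNReal.ofReal α := iSup₂_le fun t ht => by
        rw [Measure.map_apply hY measurableSet_Iic, ← ENNReal.ofReal_toReal (measure_ne_top ρ _)]
        exact ENNReal.ofReal_le_ofReal ht

theorem fusion_validity_just_valid_case_general
    {Ω : Type*} [MeasurableSpace Ω] (μ : Measure Ω) [IsProbabilityMeasure μ]
    (k : ℕ) (P : Fin k → Ω → ℝ)
    (hmeas : ∀ i, Measurable (P i))
    (hindep : iIndepFun P μ)
    (hval : ∀ i, ∀ α ∈ Set.Icc (0:ℝ) 1, μ {ω | P i ω ≤ α} ≤ ENNReal.ofReal α)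
    (γ : (Fin k → ℝ) → ℝ) (hγcont : Continuous γ)
    (hγmono : ∀ x y : Fin k → ℝ, (∀ i, x i ≤ y i) → γ x ≤ γ y)
    (F : ℝ → ℝ)
    (hF : ∀ t, F t =
      ((Measure.pi fun _ : Fin k => volume.restrict (Set.Icc (0:ℝ) 1))
        {x | γ x ≤ t}).toReal) :
    ∀ α ∈ Set.Icc (0:ℝ) 1,
      μ {ω | F (γ fun i => P i ω) ≤ α} ≤ ENNReal.ofReal α := by
  intro α _
  obtain rfl : F = _ := funext hF
  set U := Measure.pi fun _ : Fin k => volume.restrict (Icc (0 : ℝ) 1)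
  have hcdf : Monotone fun t => (U {y | γ y ≤ t}).toReal := monotone_toReal_measure_setOf_le U γ
  have hlower : IsLowerSet {x | (U {y | γ y ≤ γ x}).toReal ≤ α} :=
    (isLowerSet_Iic α).preimage (hcdf.comp fun x y hxy => hγmono x y hxy)
  have hmeasS : MeasurableSet {x | (U {y | γ y ≤ γ x}).toReal ≤ α} :=
    (hcdf.measurable.comp hγcont.measurable) measurableSet_Iic
  have hmarg (i : Fin k) (a : ℝ) : μ.map (P i) (Iic a) ≤ volume.restrict (Icc 0 1) (Iic a) := by
    have := Measure.isProbabilityMeasure_map (μ := μ) (hmeas i).aemeasurable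
    refine measure_Iic_le_volume_restrict_Icc (fun α hα => ?_) a
    rw [Measure.map_apply (hmeas i) measurableSet_Iic]
    exact hval i α hα
  calc μ {ω | (U {y | γ y ≤ γ fun i => P i ω}).toReal ≤ α}
      = Measure.pi (fun i => μ.map (P i)) {x | (U {y | γ y ≤ γ x}).toReal ≤ α} := by
        rw [← hindep.map_fun_eq_pi_map fun i => (hmeas i).aemeasurable,
          Measure.map_apply (measurable_pi_lambda _ hmeas) hmeasS]
        rfl
    _ ≤ U {x | (U {y | γ y ≤ γ x}).toReal ≤ α} := hlower.measure_pi_le_of_Iic_le hmeasS hmarg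
    _ ≤ ENNReal.ofReal α := measure_cdf_comp_le U hγcont.measurable α

theorem fusion_validity_just_valid_case
    {Ω : Type*} [MeasurableSpace Ω] (μ : Measure Ω) [IsProbabilityMeasure μ]
    (k : ℕ) (P : Fin k → Ω → ℝ)
    (hmeas : ∀ i, Measurable (P i))
    (hindep : iIndepFun P μ)
    (hranges : ∀ i ω, P i ω ∈ Set.Icc (0:ℝ) 1)
    (hval : ∀ i, ∀ α ∈ Set.Icc (0:ℝ) 1, μ {ω | P i ω ≤ α} ≤ ENNReal.ofReal α)
    (γ : (Fin k → ℝ) → ℝ) (hγcont : Continuous γ)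
    (hγmono : ∀ x y : Fin k → ℝ, (∀ i, x i ≤ y i) → γ x ≤ γ y)
    (F : ℝ → ℝ)
    (hF : ∀ t, F t =
      ((Measure.pi fun _ : Fin k => volume.restrict (Set.Icc (0:ℝ) 1))
        {x | γ x ≤ t}).toReal) :
    ∀ α ∈ Set.Icc (0:ℝ) 1,
      μ {ω | F (γ fun i => P i ω) ≤ α} ≤ ENNReal.ofReal α :=
  fusion_validity_just_valid_case_general μ k P hmeas hindep hval γ hγcont hγmono F hF
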